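/- arXiv:1909.10577 — 6 statements merged into one kernel-verified Lean document; each statement's English description precedes it below -/
import Mathlib

section
/- Let R be the R-algebra of continuous functions on the reals, and for each ω in an index set Ω fix a continuous kernel function k_ω. Define operators I_ω(f)(x) = ∫_0^x k_ω(t) f(t) dt. Then for all α, β in Ω and all f, g in R, I_α(f)·I_β(g) = I_α(f·I_β(g)) + I_β(I_α(f)·g); that is, (R, {I_ω}) is a matching Rota-Baxter algebra of weight zero. -/
/-- The integral operators `I_ω(f)(x) = ∫_0^x k_ω(t) f(t) dt` on continuous functions
make the algebra of continuous functions on ℝ a matching Rota-Baxter algebra of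
weight zero. -/
theorem matching_RB_of_integral_kernels {Ω : Type*}
    (k : Ω → ℝ → ℝ) (hk : ∀ ω, Continuous (k ω))
    (I : Ω → (ℝ → ℝ) → (ℝ → ℝ))
    (hI : ∀ ω (h : ℝ → ℝ) (x : ℝ), I ω h x = ∫ t in (0:ℝ)..x, k ω t * h t)
    (f g : ℝ → ℝ) (hf : Continuous f) (hg : Continuous g)
    (α β : Ω) (x : ℝ) :
    I α f x * I β g x
      = I α (fun t => f t * I β g t) x + I β (fun t => I α f t * g t) x := by
  set F : ℝ → ℝ := fun y => ∫ t in (0:ℝ)..y, k α t * f t with hF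
  set G : ℝ → ℝ := fun y => ∫ t in (0:ℝ)..y, k β t * g t with hG
  have hkf : Continuous fun t => k α t * f t := (hk α).mul hf
  have hkg : Continuous fun t => k β t * g t := (hk β).mul hg
  have hFd : ∀ y ∈ Set.uIcc (0:ℝ) x, HasDerivAt F (k α y * f y) y := fun y _ =>
    intervalIntegral.integral_hasDerivAt_right (hkf.intervalIntegrable _ _)
      (hkf.stronglyMeasurableAtFilter _ _) hkf.continuousAt
  have hGd : ∀ y ∈ Set.uIcc (0:ℝ) x, HasDerivAt G (k β y * g y) y := fun y _ =>
    intervalIntegral.integral_hasDerivAt_right (hkg.intervalIntegrable _ _)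
      (hkg.stronglyMeasurableAtFilter _ _) hkg.continuousAt
  have key := intervalIntegral.integral_mul_deriv_eq_deriv_mul hFd hGd
      (hkf.intervalIntegrable _ _) (hkg.intervalIntegrable _ _)
  have hF0 : F 0 = 0 := intervalIntegral.integral_same
  have hIα : ∀ y, I α f y = F y := fun y => hI α f y
  have hIβ : ∀ y, I β g y = G y := fun y => hI β g y
  rw [hI α (fun t => f t * I β g t) x, hI β (fun t => I α f t * g t) x, hIα, hIβ]
  have e1 : (∫ t in (0:ℝ)..x, k α t * (f t * I β g t))
      = ∫ t in (0:ℝ)..x, (k α t * f t) * G t := by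
    refine intervalIntegral.integral_congr fun t _ => ?_
    rw [hIβ]; ring
  have e2 : (∫ t in (0:ℝ)..x, k β t * (I α f t * g t))
      = ∫ t in (0:ℝ)..x, F t * (k β t * g t) := by
    refine intervalIntegral.integral_congr fun t _ => ?_
    rw [hIα]; ring
  rw [e1, e2, key, hF0]
  ring
end

section
/- Let (R, {P_ω | ω ∈ Ω}) be a matching Rota-Baxter algebra of weight λ_Ω. For each i in an index set I, let A_i = {a_{i,ω} ∈ k | ω ∈ Ω} be a finitely supported family of scalars and define P_i := Σ_ω a_{i,ω} P_ω. Then (R, {P_i | i ∈ I}) is a matching Rota-Baxter algebra of weight λ_I, where λ_i := Σ_ω a_{i,ω} λ_ω. In particular, each P_i alone is a Rota-Baxter operator of weight λ_i. -/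
/-- Finitely supported linear combinations of the operators of a matching
Rota-Baxter algebra of weight `λ_Ω` form a matching Rota-Baxter algebra of
weight `λ_I`, where `λ_i = Σ_ω a_{i,ω} λ_ω`. -/
theorem matching_RB_linear_combinations {k R : Type*} [CommRing k] [Ring R] [Algebra k R]
    {Ω I : Type*} (P : Ω → R →ₗ[k] R) (lam : Ω → k)
    (hP : ∀ (α β : Ω) (x y : R),
      P α x * P β y = P α (x * P β y) + P β (P α x * y) + lam β • P α (x * y))
    (a : I → Ω →₀ k)
    (Q : I → R → R)
    (hQ : ∀ (i : I) (x : R), Q i x = (a i).sum fun ω c => c • P ω x)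
    (lam' : I → k)
    (hlam' : ∀ i : I, lam' i = (a i).sum fun ω c => c * lam ω) :
    ∀ (i j : I) (x y : R),
      Q i x * Q j y = Q i (x * Q j y) + Q j (Q i x * y) + lam' j • Q i (x * y) := by
  intro i j x y
  simp only [hQ, hlam', Finsupp.sum]
  simp only [Finset.sum_mul, Finset.mul_sum, smul_mul_assoc, mul_smul_comm, smul_smul,
    map_sum, LinearMap.map_smul, Finset.smul_sum, Finset.sum_smul]
  rw [Finset.sum_comm (s := (a j).support) (t := (a i).support)]
  conv_rhs => rw [Finset.sum_comm (s := (a j).support) (t := (a i).support)]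
  rw [← Finset.sum_add_distrib, ← Finset.sum_add_distrib]
  refine Finset.sum_congr rfl fun ω _ => ?_
  rw [← Finset.sum_add_distrib, ← Finset.sum_add_distrib]
  refine Finset.sum_congr rfl fun η _ => ?_
  rw [hP ω η x y]
  simp only [smul_add, smul_smul]
  ring_nf
end

section
/- Let r = Σ_i u_i ⊗ v_i be a solution of the associative Yang-Baxter equation of weight λ in a unital algebra R, i.e., r_13 r_12 − r_12 r_23 + r_23 r_13 = −λ r_13. Then the operator P_r(x) := Σ_i u_i x v_i is a Rota-Baxter operator of weight λ on R: P_r(x)P_r(y) = P_r(xP_r(y)) + P_r(P_r(x)y) + λ P_r(xy). -/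
open TensorProduct

/-!
Sandwiching `x` and `y` into the three tensor slots, `a ⊗ b ⊗ c ↦ a x b y c`, is a linear map
`R ⊗ R ⊗ R → R`. It sends `r₁₃ r₁₂`, `r₁₂ r₂₃`, `r₂₃ r₁₃` and `r₁₃` to `P(P(x) y)`, `P(x) P(y)`,
`P(x P(y))` and `P(x y)` respectively, so applying it to the associative Yang-Baxter equation
gives the Rota-Baxter identity.
-/

namespace AYBE

variable {k R : Type*} [CommRing k] [Ring R] [Algebra k R]

def sandwich (x y : R) : R ⊗[k] (R ⊗[k] R) →ₗ[k] R :=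
  LinearMap.mul' k R ∘ₗ TensorProduct.map (LinearMap.mulRight k x)
    (LinearMap.mul' k R ∘ₗ TensorProduct.map (LinearMap.mulRight k y) LinearMap.id)

@[simp]
theorem sandwich_tmul (x y a b c : R) :
    sandwich (k := k) x y (a ⊗ₜ (b ⊗ₜ c)) = a * x * b * y * c := by
  simp [sandwich, mul_assoc]

variable {ι : Type*} [Fintype ι] (u v : ι → R)

def sandwichSum (x : R) : R := ∑ i, u i * x * v i

variable (x y : R)

theorem sandwich_r13_mul_r12 :
    sandwich (k := k) x y ((∑ i, u i ⊗ₜ[k] ((1 : R) ⊗ₜ[k] v i)) *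
      ∑ i, u i ⊗ₜ[k] (v i ⊗ₜ[k] (1 : R))) =
      sandwichSum u v (sandwichSum u v x * y) := by
  simp only [Algebra.TensorProduct.tmul_mul_tmul, map_sum, sandwich_tmul,
    sandwichSum, Finset.sum_mul, Finset.mul_sum, one_mul, mul_one, mul_assoc]
  exact Finset.sum_comm

theorem sandwich_r12_mul_r23 :
    sandwich (k := k) x y ((∑ i, u i ⊗ₜ[k] (v i ⊗ₜ[k] (1 : R))) *
      ∑ i, (1 : R) ⊗ₜ[k] (u i ⊗ₜ[k] v i)) =
      sandwichSum u v x * sandwichSum u v y := by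
  simp only [Algebra.TensorProduct.tmul_mul_tmul, map_sum, sandwich_tmul,
    sandwichSum, Finset.sum_mul, Finset.mul_sum, one_mul, mul_one, mul_assoc]

theorem sandwich_r23_mul_r13 :
    sandwich (k := k) x y ((∑ i, (1 : R) ⊗ₜ[k] (u i ⊗ₜ[k] v i)) *
      ∑ i, u i ⊗ₜ[k] ((1 : R) ⊗ₜ[k] v i)) =
      sandwichSum u v (x * sandwichSum u v y) := by
  simp only [Algebra.TensorProduct.tmul_mul_tmul, map_sum, sandwich_tmul,
    sandwichSum, Finset.sum_mul, Finset.mul_sum, one_mul, mul_one, mul_assoc]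

theorem sandwich_r13 :
    sandwich (k := k) x y (∑ i, u i ⊗ₜ[k] ((1 : R) ⊗ₜ[k] v i)) = sandwichSum u v (x * y) := by
  simp only [map_sum, sandwich_tmul, sandwichSum, mul_one, mul_assoc]

end AYBE

open AYBE in
/-- A solution of the associative Yang-Baxter equation of weight `λ` induces a
Rota-Baxter operator of weight `λ` via `P_r(x) = Σ_i u_i x v_i`. -/
theorem RB_of_AYBE {k R : Type*} [CommRing k] [Ring R] [Algebra k R]
    {ι : Type*} [Fintype ι]
    (u v : ι → R) (lam : k)
    (r12 r13 r23 : R ⊗[k] (R ⊗[k] R))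
    (h12 : r12 = ∑ i, u i ⊗ₜ[k] (v i ⊗ₜ[k] (1 : R)))
    (h13 : r13 = ∑ i, u i ⊗ₜ[k] ((1 : R) ⊗ₜ[k] v i))
    (h23 : r23 = ∑ i, (1 : R) ⊗ₜ[k] (u i ⊗ₜ[k] v i))
    (hYB : r13 * r12 - r12 * r23 + r23 * r13 = -(lam • r13))
    (P : R → R)
    (hP : ∀ x : R, P x = ∑ i, u i * x * v i) :
    ∀ x y : R, P x * P y = P (x * P y) + P (P x * y) + lam • P (x * y) := by
  obtain rfl : P = sandwichSum u v := funext hP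
  intro x y
  have key := congrArg (sandwich (k := k) x y) hYB
  simp only [map_add, map_sub, map_neg, map_smul, h12, h13, h23, sandwich_r13_mul_r12,
    sandwich_r12_mul_r23, sandwich_r23_mul_r13, sandwich_r13] at key
  linear_combination (norm := module) -key
end

section
/- Let (T, {≺_ω, ≻_ω, ·_ω | ω ∈ Ω}) be a matching tridendriform algebra. For finitely supported scalar families A_i = {a_{i,ω}}, define ≺_i := Σ_ω a_{i,ω} ≺_ω, ≻_i := Σ_ω a_{i,ω} ≻_ω, ·_i := Σ_ω a_{i,ω} ·_ω. Then (T, {≺_i, ≻_i, ·_i | i ∈ I}) is again a matching tridendriform algebra. -/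
section
variable {k T Ω : Type*} [CommRing k] [AddCommGroup T] [Module k T]

private lemma expandL (f g : Ω → T →ₗ[k] T →ₗ[k] T) (b d : Ω →₀ k) (x y z : T) :
    (b.sum fun β c => c • f β (d.sum fun α e => e • g α x y) z)
      = b.sum fun β c => d.sum fun α e => (c * e) • f β (g α x y) z := by
  refine Finsupp.sum_congr fun β _ => ?_
  simp [map_finsuppSum, Finsupp.sum_apply', Finsupp.smul_sum, smul_smul]

private lemma expandR (f g : Ω → T →ₗ[k] T →ₗ[k] T) (b d : Ω →₀ k) (x y z : T) :
    (b.sum fun β c => c • f β x (d.sum fun α e => e • g α y z))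
      = b.sum fun β c => d.sum fun α e => (c * e) • f β x (g α y z) := by
  refine Finsupp.sum_congr fun β _ => ?_
  simp [map_finsuppSum, Finsupp.smul_sum, smul_smul]

private lemma swapC (b d : Ω →₀ k) (F : Ω → Ω → T) :
    (b.sum fun β c => d.sum fun α e => (c * e) • F β α)
      = d.sum fun α e => b.sum fun β c => (e * c) • F β α := by
  rw [Finsupp.sum_comm]
  exact Finsupp.sum_congr fun α _ => Finsupp.sum_congr fun β _ => by rw [mul_comm]

end

/-- Finitely supported linear combinations of the operations of a matching
tridendriform algebra again form a matching tridendriform algebra. -/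
theorem matching_tridendriform_linear_combinations
    {k T : Type*} [CommRing k] [AddCommGroup T] [Module k T]
    {Ω I : Type*}
    (pre suc dot : Ω → T →ₗ[k] T →ₗ[k] T)
    (h1 : ∀ (α β : Ω) (x y z : T), pre β (pre α x y) z
      = pre α x (pre β y z) + pre β x (suc α y z) + pre α x (dot β y z))
    (h2 : ∀ (α β : Ω) (x y z : T), pre β (suc α x y) z = suc α x (pre β y z))
    (h3 : ∀ (α β : Ω) (x y z : T), suc α x (suc β y z)
      = suc α (pre β x y) z + suc β (suc α x y) z + suc α (dot β x y) z)
    (h4 : ∀ (α β : Ω) (x y z : T), dot β (suc α x y) z = suc α x (dot β y z))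
    (h5 : ∀ (α β : Ω) (x y z : T), dot β (pre α x y) z = dot β x (suc α y z))
    (h6 : ∀ (α β : Ω) (x y z : T), pre β (dot α x y) z = dot α x (pre β y z))
    (h7 : ∀ (α β : Ω) (x y z : T), dot β (dot α x y) z = dot α x (dot β y z))
    (a : I → Ω →₀ k)
    (pre' suc' dot' : I → T → T → T)
    (hpre' : ∀ (i : I) (x y : T), pre' i x y = (a i).sum fun ω c => c • pre ω x y)
    (hsuc' : ∀ (i : I) (x y : T), suc' i x y = (a i).sum fun ω c => c • suc ω x y)
    (hdot' : ∀ (i : I) (x y : T), dot' i x y = (a i).sum fun ω c => c • dot ω x y) :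
    (∀ (i j : I) (x y z : T), pre' j (pre' i x y) z
      = pre' i x (pre' j y z) + pre' j x (suc' i y z) + pre' i x (dot' j y z)) ∧
    (∀ (i j : I) (x y z : T), pre' j (suc' i x y) z = suc' i x (pre' j y z)) ∧
    (∀ (i j : I) (x y z : T), suc' i x (suc' j y z)
      = suc' i (pre' j x y) z + suc' j (suc' i x y) z + suc' i (dot' j x y) z) ∧
    (∀ (i j : I) (x y z : T), dot' j (suc' i x y) z = suc' i x (dot' j y z)) ∧
    (∀ (i j : I) (x y z : T), dot' j (pre' i x y) z = dot' j x (suc' i y z)) ∧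
    (∀ (i j : I) (x y z : T), pre' j (dot' i x y) z = dot' i x (pre' j y z)) ∧
    (∀ (i j : I) (x y z : T), dot' j (dot' i x y) z = dot' i x (dot' j y z)) := by
  refine ⟨?_, ?_, ?_, ?_, ?_, ?_, ?_⟩ <;> intro i j x y z <;>
    simp only [hpre', hsuc', hdot']
  · rw [expandL pre pre (a j) (a i), expandR pre pre (a i) (a j),
      expandR pre suc (a j) (a i), expandR pre dot (a i) (a j)]
    simp only [h1, smul_add, Finsupp.sum_add]
    rw [swapC (a j) (a i) (fun β α => pre α x (pre β y z)),
      swapC (a j) (a i) (fun β α => pre α x (dot β y z))]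
  · rw [expandL pre suc (a j) (a i), expandR suc pre (a i) (a j)]
    simp only [h2]
    rw [swapC (a j) (a i) (fun β α => suc α x (pre β y z))]
  · rw [expandR suc suc (a i) (a j), expandL suc pre (a i) (a j),
      expandL suc suc (a j) (a i), expandL suc dot (a i) (a j)]
    simp only [h3, smul_add, Finsupp.sum_add]
    rw [swapC (a j) (a i) (fun β α => suc β (suc α x y) z)]
  · rw [expandL dot suc (a j) (a i), expandR suc dot (a i) (a j)]
    simp only [h4]
    rw [swapC (a j) (a i) (fun β α => suc α x (dot β y z))]
  · rw [expandL dot pre (a j) (a i), expandR dot suc (a j) (a i)]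
    simp only [h5]
  · rw [expandL pre dot (a j) (a i), expandR dot pre (a i) (a j)]
    simp only [h6]
    rw [swapC (a j) (a i) (fun β α => dot α x (pre β y z))]
  · rw [expandL dot dot (a j) (a i), expandR dot dot (a i) (a j)]
    simp only [h7]
    rw [swapC (a j) (a i) (fun β α => dot α x (dot β y z))]
end

section
/- Let (A, {∗_ω | ω ∈ Ω}) be a matching pre-Lie algebra and let {c_ω | ω ∈ Ω} ⊆ k be a finitely supported family of scalars. Then the operation x ∗ y := Σ_ω c_ω (x ∗_ω y) makes (A, ∗) a pre-Lie algebra: x∗(y∗z) − (x∗y)∗z = y∗(x∗z) − (y∗x)∗z. -/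
/-- A finitely supported linear combination of the operations of a matching
pre-Lie algebra is a pre-Lie product. -/
theorem preLie_of_matching_preLie_linear_combination
    {k A : Type*} [CommRing k] [AddCommGroup A] [Module k A] {Ω : Type*}
    (ast : Ω → A →ₗ[k] A →ₗ[k] A)
    (hpre : ∀ (α β : Ω) (x y z : A),
      ast α x (ast β y z) - ast β (ast α x y) z
        = ast β y (ast α x z) - ast α (ast β y x) z)
    (c : Ω →₀ k)
    (star : A → A → A)
    (hstar : ∀ x y : A, star x y = c.sum fun ω cc => cc • ast ω x y) :
    ∀ x y z : A,
      star x (star y z) - star (star x y) z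
        = star y (star x z) - star (star y x) z := by
  intro x y z
  simp only [hstar, Finsupp.sum]
  simp only [map_sum, map_smul, LinearMap.sum_apply, LinearMap.smul_apply,
    Finset.smul_sum]
  nth_rewrite 2 [Finset.sum_comm]
  nth_rewrite 3 [Finset.sum_comm]
  rw [← Finset.sum_sub_distrib, ← Finset.sum_sub_distrib]
  refine Finset.sum_congr rfl fun α _ => ?_
  rw [← Finset.sum_sub_distrib, ← Finset.sum_sub_distrib]
  refine Finset.sum_congr rfl fun β _ => ?_
  rw [smul_comm (c β) (c α), smul_comm (c β) (c α), ← smul_sub, ← smul_sub,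
    ← smul_sub, ← smul_sub, hpre]
end

section
/- Let (A, {≺_ω, ≻_ω | ω ∈ Ω}) be a matching dendriform algebra and let A_i = {a_{i,ω}} (i ∈ I) be finitely supported scalar families. Define ≺_i := Σ_ω a_{i,ω} ≺_ω and ≻_i := Σ_ω a_{i,ω} ≻_ω. Then (A, {≺_i, ≻_i | i ∈ I}) is a matching dendriform algebra; in particular, for each i, (A, ≺_i, ≻_i) is a dendriform algebra. -/
/-- Finitely supported linear combinations of the operations of a matching
dendriform algebra again form a matching dendriform algebra. -/
theorem matching_dendriform_linear_combinations
    {k A : Type*} [CommRing k] [AddCommGroup A] [Module k A]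
    {Ω I : Type*}
    (pre suc : Ω → A →ₗ[k] A →ₗ[k] A)
    (h1 : ∀ (α β : Ω) (x y z : A), pre β (pre α x y) z
      = pre α x (pre β y z) + pre β x (suc α y z))
    (h2 : ∀ (α β : Ω) (x y z : A), pre β (suc α x y) z = suc α x (pre β y z))
    (h3 : ∀ (α β : Ω) (x y z : A), suc α x (suc β y z)
      = suc α (pre β x y) z + suc β (suc α x y) z)
    (a : I → Ω →₀ k)
    (pre' suc' : I → A → A → A)
    (hpre' : ∀ (i : I) (x y : A), pre' i x y = (a i).sum fun ω c => c • pre ω x y)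
    (hsuc' : ∀ (i : I) (x y : A), suc' i x y = (a i).sum fun ω c => c • suc ω x y) :
    (∀ (i j : I) (x y z : A), pre' j (pre' i x y) z
      = pre' i x (pre' j y z) + pre' j x (suc' i y z)) ∧
    (∀ (i j : I) (x y z : A), pre' j (suc' i x y) z = suc' i x (pre' j y z)) ∧
    (∀ (i j : I) (x y z : A), suc' i x (suc' j y z)
      = suc' i (pre' j x y) z + suc' j (suc' i x y) z) := by
  refine ⟨fun i j x y z => ?_, fun i j x y z => ?_, fun i j x y z => ?_⟩
  · simp only [hpre', hsuc', Finsupp.sum, map_sum, map_smul, LinearMap.sum_apply,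
      LinearMap.smul_apply, Finset.smul_sum, smul_smul, h1, smul_add,
      Finset.sum_add_distrib]
    congr 1 <;> rw [Finset.sum_comm] <;> exact Finset.sum_congr rfl fun α _ =>
      Finset.sum_congr rfl fun β _ => by rw [mul_comm]
  · simp only [hpre', hsuc', Finsupp.sum, map_sum, map_smul, LinearMap.sum_apply,
      LinearMap.smul_apply, Finset.smul_sum, smul_smul, h2]
    rw [Finset.sum_comm]
    exact Finset.sum_congr rfl fun α _ =>
      Finset.sum_congr rfl fun β _ => by rw [mul_comm]
  · simp only [hpre', hsuc', Finsupp.sum, map_sum, map_smul, LinearMap.sum_apply,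
      LinearMap.smul_apply, Finset.smul_sum, smul_smul, h3, smul_add,
      Finset.sum_add_distrib]
    congr 1 <;> rw [Finset.sum_comm] <;> exact Finset.sum_congr rfl fun α _ =>
      Finset.sum_congr rfl fun β _ => by rw [mul_comm]
end
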